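/- arXiv:2602.08618 — 5 statements merged into one kernel-verified Lean document; each statement's English description precedes it below -/
import Mathlib

section
/- Let L > 0 and let f : ℝ^n → ℝ be L-smooth convex. Then for every x ∈ ℝ^n one has ⟨∇f(x) − p⋆, p⋆⟩ ≥ 0 (equivalently ⟨∇g(x), p⋆⟩ ≥ 0), and consequently for every x ∈ ℝ^n and every real s ≥ 0 one has g(x + s·p⋆) ≥ g(x). -/
open scoped InnerProductSpace
open Filter Topology

/-- Legendre–Fenchel conjugate of `f`, valued in `ℝ ∪ {∞}` (modeled in `EReal`). -/
noncomputable def fconj {n : ℕ} (f : EuclideanSpace ℝ (Fin n) → ℝ)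
    (p : EuclideanSpace ℝ (Fin n)) : EReal :=
  ⨆ x : EuclideanSpace ℝ (Fin n), ((⟪p, x⟫_ℝ - f x : ℝ) : EReal)

/-- Effective domain `dom f*` of the Legendre–Fenchel conjugate. -/
noncomputable def fconjDom {n : ℕ} (f : EuclideanSpace ℝ (Fin n) → ℝ) :
    Set (EuclideanSpace ℝ (Fin n)) := {p | fconj f p < ⊤}

/-- Dual divergence `D_f(x, p) = f x + f*(p) − ⟨p, x⟩` (meaningful for `p ∈ dom f*`). -/
noncomputable def dualDiv {n : ℕ} (f : EuclideanSpace ℝ (Fin n) → ℝ)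
    (x p : EuclideanSpace ℝ (Fin n)) : ℝ :=
  f x + (fconj f p).toReal - ⟪p, x⟫_ℝ

/-- `f` is `L`-smooth convex: convex, differentiable, with `L`-Lipschitz gradient. -/
def LSmoothConvex {n : ℕ} (L : ℝ) (f : EuclideanSpace ℝ (Fin n) → ℝ) : Prop :=
  ConvexOn ℝ Set.univ f ∧ Differentiable ℝ f ∧
    LipschitzWith (Real.toNNReal L) (fun x => gradient f x)

/-- The gradient inequality for convex differentiable functions. -/
lemma grad_ineq {n : ℕ} {f : EuclideanSpace ℝ (Fin n) → ℝ}
    (hc : ConvexOn ℝ Set.univ f) (hd : Differentiable ℝ f)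
    (x y : EuclideanSpace ℝ (Fin n)) :
    f x + ⟪gradient f x, y - x⟫_ℝ ≤ f y := by
  set v := y - x with hv
  have hline : ∀ t : ℝ, HasDerivAt (fun t : ℝ => x + t • v) v t := by
    intro t
    simpa using (hasDerivAt_id t).smul_const v |>.const_add x
  have hF : HasFDerivAt f ((InnerProductSpace.toDual ℝ _) (gradient f x)) x :=
    (hasGradientAt_iff_hasFDerivAt).mp (hd x).hasGradientAt
  have h0 : (fun t : ℝ => x + t • v) 0 = x := by simp
  have hderiv : HasDerivAt (fun t : ℝ => f (x + t • v)) ⟪gradient f x, v⟫_ℝ 0 := by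
    have := (h0 ▸ hF).comp_hasDerivAt 0 (hline 0)
    simp only [InnerProductSpace.toDual_apply_apply, zero_smul, add_zero] at this
    exact this
  have hconv : ConvexOn ℝ Set.univ (fun t : ℝ => f (x + t • v)) := by
    have h := hc.comp_affineMap (AffineMap.lineMap x y : ℝ →ᵃ[ℝ] _)
    rw [Set.preimage_univ] at h
    have heq : (fun t : ℝ => f (x + t • v)) = f ∘ ⇑(AffineMap.lineMap x y : ℝ →ᵃ[ℝ] _) := by
      funext t
      simp only [Function.comp_apply, AffineMap.lineMap_apply, vsub_eq_sub, vadd_eq_add, hv]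
      congr 1
      abel
    rw [heq]
    exact h
  have hs := hconv.le_slope_of_hasDerivAt (Set.mem_univ (0:ℝ)) (Set.mem_univ (1:ℝ))
    zero_lt_one hderiv
  have : slope (fun t : ℝ => f (x + t • v)) 0 1 = f y - f x := by
    simp [slope_def_field, hv]
  rw [this] at hs
  linarith
  
/-- The gradient is always in the conjugate domain. -/
lemma grad_mem_dom {n : ℕ} {f : EuclideanSpace ℝ (Fin n) → ℝ}
    (hc : ConvexOn ℝ Set.univ f) (hd : Differentiable ℝ f)
    (x : EuclideanSpace ℝ (Fin n)) : gradient f x ∈ fconjDom f := by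
  have hle : fconj f (gradient f x) ≤ ((⟪gradient f x, x⟫_ℝ - f x : ℝ) : EReal) := by
    refine iSup_le fun y => ?_
    rw [EReal.coe_le_coe_iff]
    have := grad_ineq hc hd x y
    rw [inner_sub_right] at this
    linarith
  exact lt_of_le_of_lt hle (EReal.coe_lt_top _)

/-- for every `x`, `⟪∇f(x) − p⋆, p⋆⟫ ≥ 0`, and consequently
`g(x + s·p⋆) ≥ g(x)` for all `s ≥ 0`, where `g(x) = f(x) − ⟪p⋆, x⟫`. -/
theorem stmt0 {n : ℕ} (hn : 1 ≤ n) (L : ℝ) (hL : 0 < L)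
    (f : EuclideanSpace ℝ (Fin n) → ℝ) (hf : LSmoothConvex L f)
    (pstar : EuclideanSpace ℝ (Fin n))
    (hps : pstar ∈ closure (fconjDom f))
    (hmin : ∀ q ∈ closure (fconjDom f), ‖pstar‖ ≤ ‖q‖) :
    (∀ x, 0 ≤ ⟪gradient f x - pstar, pstar⟫_ℝ) ∧
    (∀ x, ∀ s : ℝ, 0 ≤ s →
      f x - ⟪pstar, x⟫_ℝ ≤ f (x + s • pstar) - ⟪pstar, x + s • pstar⟫_ℝ) := by
  obtain ⟨hc, hd, _⟩ := hf
  -- convexity of the closure of the domain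
  have hdomconv : Convex ℝ (fconjDom f) := by
    intro p hp q hq a b ha hb hab
    simp only [fconjDom, Set.mem_setOf_eq, fconj] at hp hq ⊢
    obtain ⟨P, hP⟩ : ∃ P : ℝ, fconj f p ≤ (P : EReal) := by
      rcases EReal.lt_iff_exists_real_btwn.mp hp with ⟨r, hr, _⟩
      exact ⟨r, le_of_lt hr⟩
    obtain ⟨Q, hQ⟩ : ∃ Q : ℝ, fconj f q ≤ (Q : EReal) := by
      rcases EReal.lt_iff_exists_real_btwn.mp hq with ⟨r, hr, _⟩
      exact ⟨r, le_of_lt hr⟩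
    have hP' : ∀ y, ⟪p, y⟫_ℝ - f y ≤ P := fun y => by
      have := le_trans (le_iSup _ y) hP
      exact_mod_cast this
    have hQ' : ∀ y, ⟪q, y⟫_ℝ - f y ≤ Q := fun y => by
      have := le_trans (le_iSup _ y) hQ
      exact_mod_cast this
    have : (⨆ y : EuclideanSpace ℝ (Fin n), ((⟪a • p + b • q, y⟫_ℝ - f y : ℝ) : EReal))
        ≤ ((a * P + b * Q : ℝ) : EReal) := by
      refine iSup_le fun y => ?_
      rw [EReal.coe_le_coe_iff, inner_add_left, real_inner_smul_left, real_inner_smul_left]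
      have hfy : a * f y + b * f y = f y := by rw [← add_mul, hab, one_mul]
      nlinarith [mul_le_mul_of_nonneg_left (hP' y) ha,
        mul_le_mul_of_nonneg_left (hQ' y) hb, hfy]
    exact lt_of_le_of_lt this (EReal.coe_lt_top _)
  have hclconv : Convex ℝ (closure (fconjDom f)) := hdomconv.closure
  -- minimality characterization
  have hiInf : ‖(0 : EuclideanSpace ℝ (Fin n)) - pstar‖
      = ⨅ w : closure (fconjDom f), ‖(0 : EuclideanSpace ℝ (Fin n)) - w‖ := by
    haveI : Nonempty (closure (fconjDom f)) := ⟨⟨pstar, hps⟩⟩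
    refine le_antisymm ?_ ?_
    · refine le_ciInf fun w => ?_
      simpa [norm_sub_rev, norm_neg] using hmin w w.2
    · refine ciInf_le ⟨0, fun _ ⟨_, h⟩ => h ▸ norm_nonneg _⟩ (⟨pstar, hps⟩ : closure (fconjDom f))
  have hkey : ∀ w ∈ closure (fconjDom f), 0 ≤ ⟪w - pstar, pstar⟫_ℝ := by
    intro w hw
    have := (norm_eq_iInf_iff_real_inner_le_zero hclconv hps).mp hiInf w hw
    rw [zero_sub, inner_neg_left] at this
    have h2 : 0 ≤ ⟪pstar, w - pstar⟫_ℝ := by linarith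
    rwa [real_inner_comm] at h2
  have part1 : ∀ x, 0 ≤ ⟪gradient f x - pstar, pstar⟫_ℝ := fun x =>
    hkey _ (subset_closure (grad_mem_dom hc hd x))
  refine ⟨part1, fun x s hs => ?_⟩
  have hgi := grad_ineq hc hd x (x + s • pstar)
  have h1 := part1 x
  rw [inner_sub_left] at h1
  have hsimp : x + s • pstar - x = s • pstar := by abel
  rw [hsimp, real_inner_smul_right] at hgi
  rw [inner_add_right, real_inner_smul_right]
  have h2 : 0 ≤ s * (⟪gradient f x, pstar⟫_ℝ - ⟪pstar, pstar⟫_ℝ) :=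
    mul_nonneg hs (by linarith)
  nlinarith [real_inner_comm pstar (gradient f x)]
end

section
/- Let L > 0, let f : ℝ^n → ℝ be L-smooth convex, and let (x_k) be the gradient descent sequence with initial point x₀ and step sizes η_i > 0. Fix k ≥ 1 and assume η_i ≤ 1/L for all i ≤ k−1. Then for every p ∈ dom f*, ‖∇f(x_k)‖² − ‖p‖² ≤ 2·D_f(x₀, p)/a_k. -/
open scoped InnerProductSpace
open Filter Topology

section AuxLemmas

variable {F : Type*} [NormedAddCommGroup F] [InnerProductSpace ℝ F] [CompleteSpace F]

/-- Derivative of a smooth function along a line. -/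
lemma lineDeriv_aux (f : F → ℝ) (hd : Differentiable ℝ f) (x v : F) (t : ℝ) :
    HasDerivAt (fun s : ℝ => f (x + s • v)) ⟪gradient f (x + t • v), v⟫_ℝ t := by
  have h1 : HasFDerivAt f (InnerProductSpace.toDual ℝ F (gradient f (x + t • v))) (x + t • v) :=
    (hd _).hasGradientAt.hasFDerivAt
  have h2 : HasDerivAt (fun s : ℝ => x + s • v) v t := by
    simpa using ((hasDerivAt_id t).smul_const v).const_add x
  have h3 := h1.comp_hasDerivAt t h2
  exact h3.congr_deriv (by simp)

/-- Gradient inequality for differentiable convex functions. -/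
lemma convex_grad_ineq (f : F → ℝ) (hc : ConvexOn ℝ Set.univ f) (hd : Differentiable ℝ f)
    (x y : F) : f x + ⟪gradient f x, y - x⟫_ℝ ≤ f y := by
  set v := y - x
  set φ : ℝ → ℝ := fun s => f (x + s • v) with hφ
  have hconv : ConvexOn ℝ Set.univ φ := by
    have := hc.comp_affineMap (AffineMap.lineMap x y : ℝ →ᵃ[ℝ] F)
    have heq : ∀ s : ℝ, φ s = (f ∘ (AffineMap.lineMap x y : ℝ →ᵃ[ℝ] F)) s := by
      intro s
      simp [φ, AffineMap.lineMap_apply, v, add_comm]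
    have hpre : ((AffineMap.lineMap x y : ℝ →ᵃ[ℝ] F)) ⁻¹' Set.univ = Set.univ := by simp
    rw [hpre] at this
    exact this.congr (fun s _ => (heq s).symm)
  have hder : HasDerivAt φ ⟪gradient f x, v⟫_ℝ 0 := by
    have := lineDeriv_aux f hd x v 0
    simpa using this
  have hslope := hconv.deriv_le_slope (Set.mem_univ (0:ℝ)) (Set.mem_univ (1:ℝ))
    one_pos hder.differentiableAt
  rw [hder.deriv] at hslope
  have : slope φ 0 1 = f y - f x := by
    simp [slope, φ, v]
  rw [this] at hslope
  linarith

/-- The descent lemma (quadratic upper bound) for functions with Lipschitz gradient. -/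
lemma descent_lemma (f : F → ℝ) (L : ℝ) (hL : 0 < L) (hd : Differentiable ℝ f)
    (hl : LipschitzWith (Real.toNNReal L) (fun z => gradient f z)) (x y : F) :
    f y ≤ f x + ⟪gradient f x, y - x⟫_ℝ + L / 2 * ‖y - x‖ ^ 2 := by
  set v := y - x
  set g : ℝ → ℝ := fun s => f (x + s • v) - s * ⟪gradient f x, v⟫_ℝ - L * s ^ 2 / 2 * ‖v‖ ^ 2
    with hg
  have hder : ∀ t : ℝ, HasDerivAt g
      (⟪gradient f (x + t • v), v⟫_ℝ - ⟪gradient f x, v⟫_ℝ - L * t * ‖v‖ ^ 2) t := by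
    intro t
    have h1 := lineDeriv_aux f hd x v t
    have h2 : HasDerivAt (fun s : ℝ => s * ⟪gradient f x, v⟫_ℝ) ⟪gradient f x, v⟫_ℝ t := by
      simpa using (hasDerivAt_id t).mul_const ⟪gradient f x, v⟫_ℝ
    have h3 : HasDerivAt (fun s : ℝ => L * s ^ 2 / 2 * ‖v‖ ^ 2) (L * t * ‖v‖ ^ 2) t := by
      have : HasDerivAt (fun s : ℝ => s ^ 2) (2 * t) t := by
        simpa using hasDerivAt_pow 2 t
      have := ((this.const_mul L).div_const 2).mul_const (‖v‖ ^ 2)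
      exact this.congr_deriv (by ring)
    exact (h1.sub h2).sub h3
  have hderiv_nonpos : ∀ t ∈ Set.Ioo (0:ℝ) 1, deriv g t ≤ 0 := by
    intro t ht
    rw [(hder t).deriv]
    have hlip : ‖gradient f (x + t • v) - gradient f x‖ ≤ L * (t * ‖v‖) := by
      have := hl.dist_le_mul (x + t • v) x
      simp only [dist_eq_norm] at this
      calc ‖gradient f (x + t • v) - gradient f x‖ ≤ Real.toNNReal L * ‖x + t • v - x‖ := this
        _ = L * (t * ‖v‖) := by
            rw [Real.coe_toNNReal _ hL.le]
            congr 1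
            rw [show x + t • v - x = t • v by abel, norm_smul]
            simp [abs_of_pos ht.1]
    have hcs : ⟪gradient f (x + t • v) - gradient f x, v⟫_ℝ ≤ L * t * ‖v‖ ^ 2 := by
      calc ⟪gradient f (x + t • v) - gradient f x, v⟫_ℝ
          ≤ ‖gradient f (x + t • v) - gradient f x‖ * ‖v‖ := real_inner_le_norm _ _
        _ ≤ L * (t * ‖v‖) * ‖v‖ := by
            apply mul_le_mul_of_nonneg_right hlip (norm_nonneg _)
        _ = L * t * ‖v‖ ^ 2 := by ring
    rw [inner_sub_left] at hcs
    linarith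
  have hcont : ContinuousOn g (Set.Icc 0 1) :=
    fun t _ => ((hder t).differentiableAt).continuousAt.continuousWithinAt
  have hanti : AntitoneOn g (Set.Icc (0:ℝ) 1) := by
    apply antitoneOn_of_deriv_nonpos (convex_Icc 0 1) hcont
    · intro t ht
      rw [interior_Icc] at ht
      exact ((hder t).differentiableAt).differentiableWithinAt
    · intro t ht
      rw [interior_Icc] at ht
      exact hderiv_nonpos t ht
  have h01 := hanti (Set.mem_Icc.2 ⟨le_refl 0, zero_le_one⟩)
    (Set.mem_Icc.2 ⟨zero_le_one, le_refl 1⟩) zero_le_one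
  simp only [g] at h01
  simp only [zero_smul, add_zero, one_smul, zero_mul, sub_zero, zero_pow, mul_zero,
    zero_div, mul_one, one_mul, one_pow] at h01
  have hxy : x + v = y := by simp [v]
  rw [hxy] at h01
  linarith

/-- Quadratic lower bound for smooth convex functions. -/
lemma lower_quad (f : F → ℝ) (L : ℝ) (hL : 0 < L) (hc : ConvexOn ℝ Set.univ f)
    (hd : Differentiable ℝ f)
    (hl : LipschitzWith (Real.toNNReal L) (fun z => gradient f z)) (x y : F) :
    f x + ⟪gradient f x, y - x⟫_ℝ + 1 / (2 * L) * ‖gradient f y - gradient f x‖ ^ 2 ≤ f y := by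
  set u := gradient f y - gradient f x with hu
  set z := y - (1 / L) • u with hz
  have hA := convex_grad_ineq f hc hd x z
  have hB := descent_lemma f L hL hd hl y z
  have e1 : ⟪gradient f x, z - x⟫_ℝ
      = ⟪gradient f x, y - x⟫_ℝ - (1 / L) * ⟪gradient f x, u⟫_ℝ := by
    have : z - x = (y - x) - (1 / L) • u := by rw [hz]; abel
    rw [this, inner_sub_right, real_inner_smul_right]
  have e2 : ⟪gradient f y, z - y⟫_ℝ = -(1 / L) * ⟪gradient f y, u⟫_ℝ := by
    have : z - y = -((1 / L) • u) := by rw [hz]; abel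
    rw [this, inner_neg_right, real_inner_smul_right]; ring
  have e3 : ‖z - y‖ ^ 2 = (1 / L) ^ 2 * ‖u‖ ^ 2 := by
    have : z - y = -((1 / L) • u) := by rw [hz]; abel
    rw [this, norm_neg, norm_smul, Real.norm_eq_abs,
      abs_of_pos (by positivity : (0:ℝ) < 1 / L)]
    ring
  have e4 : ⟪gradient f y, u⟫_ℝ - ⟪gradient f x, u⟫_ℝ = ‖u‖ ^ 2 := by
    rw [← inner_sub_left, ← hu, real_inner_self_eq_norm_sq]
  rw [e1] at hA
  rw [e2, e3] at hB
  have hL' : L ≠ 0 := ne_of_gt hL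
  have key : L / 2 * ((1 / L) ^ 2 * ‖u‖ ^ 2) = 1 / (2 * L) * ‖u‖ ^ 2 := by
    field_simp
  rw [key] at hB
  have e5 : (1 / L) * ⟪gradient f y, u⟫_ℝ - (1 / L) * ⟪gradient f x, u⟫_ℝ
      = 2 * (1 / (2 * L) * ‖u‖ ^ 2) := by
    rw [← mul_sub, e4]; field_simp
  linarith [hA, hB, e5]

/-- Cocoercivity of the gradient of a smooth convex function. -/
lemma cocoercive (f : F → ℝ) (L : ℝ) (hL : 0 < L) (hc : ConvexOn ℝ Set.univ f)
    (hd : Differentiable ℝ f)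
    (hl : LipschitzWith (Real.toNNReal L) (fun z => gradient f z)) (x y : F) :
    (1 / L) * ‖gradient f y - gradient f x‖ ^ 2 ≤ ⟪gradient f y - gradient f x, y - x⟫_ℝ := by
  have h1 := lower_quad f L hL hc hd hl x y
  have h2 := lower_quad f L hL hc hd hl y x
  have e1 : ‖gradient f x - gradient f y‖ = ‖gradient f y - gradient f x‖ := norm_sub_rev _ _
  rw [e1] at h2
  have e2 : ⟪gradient f y - gradient f x, y - x⟫_ℝ
      = ⟪gradient f y, y - x⟫_ℝ - ⟪gradient f x, y - x⟫_ℝ := inner_sub_left _ _ _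
  have e3 : ⟪gradient f y, x - y⟫_ℝ = -⟪gradient f y, y - x⟫_ℝ := by
    rw [show x - y = -(y - x) by abel, inner_neg_right]
  rw [e3] at h2
  have h2L : 0 < 2 * L := by positivity
  rw [e2]
  have : 1 / L = 1 / (2 * L) + 1 / (2 * L) := by field_simp; ring
  nlinarith [h1, h2]

end AuxLemmas

/-- Scalar helper inequality. -/
lemma scalar_key (e L S P T D : ℝ) (he : 0 < e) (heL : e ≤ 1/L) (hL : 0 < L)
    (hc0 : 0 ≤ (2*T + P - S) + D) (hD : 0 ≤ D) :
    e * (S - P) ≤ 2 * (e * T) + (1/L) * D := by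
  rcases le_or_gt 0 (2*T + P - S) with hc | hc
  · nlinarith [mul_nonneg he.le hc, mul_nonneg (by positivity : (0:ℝ) ≤ 1/L) hD]
  · have h1 : (1/L) * (2*T+P-S) ≤ e * (2*T+P-S) := mul_le_mul_of_nonpos_right heL hc.le
    have h2 : 0 ≤ (1/L) * ((2*T+P-S)+D) := mul_nonneg (by positivity) hc0
    nlinarith [h1, h2]

/-- gradient descent bound `‖∇f(x_k)‖² − ‖p‖² ≤ 2 D_f(x₀,p)/a_k`. -/
theorem stmt1 {n : ℕ} (hn : 1 ≤ n) (L : ℝ) (hL : 0 < L)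
    (f : EuclideanSpace ℝ (Fin n) → ℝ) (hf : LSmoothConvex L f)
    (x₀ : EuclideanSpace ℝ (Fin n)) (η : ℕ → ℝ) (hη : ∀ i, 0 < η i)
    (x : ℕ → EuclideanSpace ℝ (Fin n)) (hx0 : x 0 = x₀)
    (hstep : ∀ k, x (k + 1) = x k - η k • gradient f (x k))
    (k : ℕ) (hk : 1 ≤ k) (hηL : ∀ i < k, η i ≤ 1 / L)
    (p : EuclideanSpace ℝ (Fin n)) (hp : p ∈ fconjDom f) :
    ‖gradient f (x k)‖ ^ 2 - ‖p‖ ^ 2 ≤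
      2 * dualDiv f x₀ p / (∑ i ∈ Finset.range k, η i) := by
  obtain ⟨hc, hd, hl⟩ := hf
  set g : ℕ → EuclideanSpace ℝ (Fin n) := fun i => gradient f (x i) with hg
  set r : ℝ := (fconj f p).toReal with hr
  -- conjugate bound
  have hrbound : ∀ z, ⟪p, z⟫_ℝ - f z ≤ r := by
    intro z
    have hle : ((⟪p, z⟫_ℝ - f z : ℝ) : EReal) ≤ fconj f p :=
      le_iSup (fun w => (((⟪p, w⟫_ℝ - f w : ℝ)) : EReal)) z
    have := EReal.toReal_le_toReal hle (EReal.coe_ne_bot _) hp.ne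
    rwa [EReal.toReal_coe] at this
  set h : ℕ → ℝ := fun i => f (x i) - ⟪p, x i⟫_ℝ with hh
  have hxdiff : ∀ i, x i - x (i + 1) = η i • g i := by
    intro i; rw [hstep i]; exact (sub_sub_cancel _ _)
  -- per-step inequality
  have step_ineq : ∀ i, η i * ⟪g (i+1) - p, g i⟫_ℝ + 1/(2*L) * ‖g (i+1) - g i‖^2
      ≤ h i - h (i+1) := by
    intro i
    have hq := lower_quad f L hL hc hd hl (x (i+1)) (x i)
    rw [hxdiff i] at hq
    have e1 : ⟪g (i+1), η i • g i⟫_ℝ = η i * ⟪g (i+1), g i⟫_ℝ := real_inner_smul_right _ _ _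
    have e2 : ‖g i - g (i+1)‖ = ‖g (i+1) - g i‖ := norm_sub_rev _ _
    rw [e1, e2] at hq
    have e3 : ⟪p, x i⟫_ℝ - ⟪p, x (i+1)⟫_ℝ = η i * ⟪p, g i⟫_ℝ := by
      rw [← inner_sub_right, hxdiff i, real_inner_smul_right]
    have e4 : ⟪g (i+1) - p, g i⟫_ℝ = ⟪g (i+1), g i⟫_ℝ - ⟪p, g i⟫_ℝ := inner_sub_left _ _ _
    simp only [hh]
    rw [e4]
    have : h i - h (i+1) = f (x i) - f (x (i+1)) - η i * ⟪p, g i⟫_ℝ := by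
      simp only [hh]; linarith [e3]
    rw [this, mul_sub]
    linarith [hq]
  -- final inequality
  have final_ineq : 1/(2*L) * ‖g k - p‖^2 ≤ h k + r := by
    set z := x k - (1/L) • (g k - p) with hz
    have hB := descent_lemma f L hL hd hl (x k) z
    have hzx : z - x k = -((1/L) • (g k - p)) := by rw [hz]; abel
    have e1 : ⟪g k, z - x k⟫_ℝ = -(1/L) * ⟪g k, g k - p⟫_ℝ := by
      rw [hzx, inner_neg_right, real_inner_smul_right]; ring
    have e2 : ‖z - x k‖^2 = (1/L)^2 * ‖g k - p‖^2 := by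
      rw [hzx, norm_neg, norm_smul, Real.norm_eq_abs,
        abs_of_pos (by positivity : (0:ℝ) < 1/L)]
      ring
    rw [e1, e2] at hB
    have key : L / 2 * ((1/L)^2 * ‖g k - p‖^2) = 1/(2*L) * ‖g k - p‖^2 := by
      field_simp
    rw [key] at hB
    have e3 : ⟪p, z⟫_ℝ = ⟪p, x k⟫_ℝ - (1/L) * ⟪p, g k - p⟫_ℝ := by
      rw [hz, inner_sub_right, real_inner_smul_right]
    have e4 : (1/L) * ⟪g k, g k - p⟫_ℝ - (1/L) * ⟪p, g k - p⟫_ℝ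
        = 2 * (1/(2*L) * ‖g k - p‖^2) := by
      rw [← mul_sub, ← inner_sub_left, real_inner_self_eq_norm_sq]
      field_simp
    have hrz := hrbound z
    rw [e3] at hrz
    simp only [hh]
    linarith [hB, hrz, e4]
  -- gradient norm monotonicity
  have step_mono : ∀ j < k, ‖g (j+1)‖^2 ≤ ‖g j‖^2 := by
    intro j hj
    have hco := cocoercive f L hL hc hd hl (x j) (x (j+1))
    have hx1 : x (j+1) - x j = -(η j • g j) := by rw [hstep j]; abel
    rw [hx1, inner_neg_right, real_inner_smul_right] at hco
    set u := g (j+1) - g j with hu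
    have hηj := hη j
    have hηLj := hηL j hj
    have hug : ⟪u, g j⟫_ℝ ≤ -‖u‖^2 := by
      have h1 : η j * ⟪u, g j⟫_ℝ ≤ -((1/L) * ‖u‖^2) := by linarith [hco]
      have h2 : (1/L) * ‖u‖^2 ≥ η j * ‖u‖^2 :=
        mul_le_mul_of_nonneg_right hηLj (by positivity)
      have h3 : η j * ⟪u, g j⟫_ℝ ≤ η j * (-‖u‖^2) := by linarith
      exact le_of_mul_le_mul_left h3 hηj
    have hadd : g (j+1) = g j + u := by rw [hu]; abel
    have := norm_add_sq_real (g j) u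
    rw [← hadd] at this
    have hN : (0:ℝ) ≤ ‖u‖^2 := by positivity
    linarith [this, hug, real_inner_comm (g j) u, hN]
  have mono : ∀ i ≤ k, ‖g k‖^2 ≤ ‖g i‖^2 := by
    have aux : ∀ m, ∀ j, j + m = k → ‖g k‖^2 ≤ ‖g j‖^2 := by
      intro m
      induction m with
      | zero => intro j hj; simp at hj; rw [hj]
      | succ m ih =>
        intro j hj
        have h1 : ‖g k‖^2 ≤ ‖g (j+1)‖^2 := ih (j+1) (by omega)
        have h2 : ‖g (j+1)‖^2 ≤ ‖g j‖^2 := step_mono j (by omega)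
        linarith
    intro i hi
    exact aux (k - i) i (by omega)
  -- per-term inequality
  have key_i : ∀ i ∈ Finset.range k,
      η i * (‖g k‖^2 - ‖p‖^2)
        ≤ 2 * (η i * ⟪g (i+1) - p, g i⟫_ℝ) + (1/L) * ‖g (i+1) - g i‖^2 := by
    intro i hi
    rw [Finset.mem_range] at hi
    have hmono : ‖g k‖^2 ≤ ‖g (i+1)‖^2 := mono (i+1) (by omega)
    have exp1 : ‖g (i+1) - g i‖^2 = ‖g (i+1)‖^2 - 2 * ⟪g (i+1), g i⟫_ℝ + ‖g i‖^2 :=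
      norm_sub_sq_real _ _
    have exp2 : ‖g i - p‖^2 = ‖g i‖^2 - 2 * ⟪g i, p⟫_ℝ + ‖p‖^2 := norm_sub_sq_real _ _
    have exp3 : ⟪g (i+1) - p, g i⟫_ℝ = ⟪g (i+1), g i⟫_ℝ - ⟪p, g i⟫_ℝ := inner_sub_left _ _ _
    have comm : ⟪g i, p⟫_ℝ = ⟪p, g i⟫_ℝ := real_inner_comm _ _
    have hnn : (0:ℝ) ≤ ‖g i - p‖^2 := by positivity
    have hc0 : 0 ≤ (2 * ⟪g (i+1) - p, g i⟫_ℝ + ‖p‖^2 - ‖g k‖^2) + ‖g (i+1) - g i‖^2 := by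
      linarith [hnn, exp1, exp2, exp3, comm, hmono]
    exact scalar_key (η i) L (‖g k‖^2) (‖p‖^2) (⟪g (i+1) - p, g i⟫_ℝ)
      (‖g (i+1) - g i‖^2) (hη i) (hηL i hi) hL hc0 (by positivity)
  -- summation
  set a : ℝ := ∑ i ∈ Finset.range k, η i with ha
  have apos : 0 < a := Finset.sum_pos (fun i _ => hη i) (Finset.nonempty_range_iff.2 (by omega))
  have hsum2 : ∑ i ∈ Finset.range k, η i * (‖g k‖^2 - ‖p‖^2)
      ≤ ∑ i ∈ Finset.range k, (2 * (η i * ⟪g (i+1) - p, g i⟫_ℝ) + (1/L) * ‖g (i+1) - g i‖^2) :=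
    Finset.sum_le_sum key_i
  have hsum3 : ∑ i ∈ Finset.range k,
      (2 * (η i * ⟪g (i+1) - p, g i⟫_ℝ) + (1/L) * ‖g (i+1) - g i‖^2)
      ≤ ∑ i ∈ Finset.range k, 2 * (h i - h (i+1)) := by
    apply Finset.sum_le_sum
    intro i _
    have hs := step_ineq i
    have : (1/L) * ‖g (i+1) - g i‖^2 = 2 * (1/(2*L) * ‖g (i+1) - g i‖^2) := by
      field_simp
    linarith [hs]
  have htel : ∑ i ∈ Finset.range k, 2 * (h i - h (i+1)) = 2 * (h 0 - h k) := by
    rw [← Finset.mul_sum, Finset.sum_range_sub' h k]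
  have hsum1 : a * (‖g k‖^2 - ‖p‖^2) = ∑ i ∈ Finset.range k, η i * (‖g k‖^2 - ‖p‖^2) := by
    rw [ha, Finset.sum_mul]
  have hhk : -h k ≤ r := by
    have h0 : (0:ℝ) ≤ h k + r :=
      le_trans (by positivity : (0:ℝ) ≤ 1/(2*L) * ‖g k - p‖^2) final_ineq
    linarith [h0]
  have hD : dualDiv f x₀ p = h 0 + r := by
    simp only [dualDiv, hh, hx0, hr]
    ring
  have main : a * (‖g k‖^2 - ‖p‖^2) ≤ 2 * dualDiv f x₀ p := by
    rw [hD]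
    calc a * (‖g k‖^2 - ‖p‖^2) = ∑ i ∈ Finset.range k, η i * (‖g k‖^2 - ‖p‖^2) := hsum1
      _ ≤ ∑ i ∈ Finset.range k, 2 * (h i - h (i+1)) := le_trans hsum2 hsum3
      _ = 2 * (h 0 - h k) := htel
      _ ≤ 2 * (h 0 + r) := by linarith [hhk]
  rw [le_div_iff₀ apos]
  linarith [main]
end

section
/- Let L > 0, let f : ℝ^n → ℝ be L-smooth convex, and suppose there exists M ∈ ℝ with f*(p) ≤ M for all p ∈ dom f*. Then dom f* is a closed set; in particular its minimum-norm point p⋆ lies in dom f*. Moreover, for every x₀ ∈ ℝ^n, D_f(x₀, p⋆) ≤ M + f(x₀) + ‖x₀‖·‖∇f(x₀)‖. -/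
/-!
`f*` is a supremum of affine functions, hence lower semicontinuous, so under the bound `f* ≤ M`
the domain `dom f*` is the closed sublevel set `{f* ≤ M}` and contains `p⋆`. By the gradient
inequality every gradient `∇f(x₀)` lies in `dom f*`, so minimality gives `‖p⋆‖ ≤ ‖∇f(x₀)‖`, and
Cauchy–Schwarz bounds `-⟨p⋆, x₀⟩` by `‖x₀‖ ‖∇f(x₀)‖`.
-/

open scoped InnerProductSpace
open Filter Topology

open Set

theorem ConvexOn.apply_sub_le_of_hasFDerivAt {E : Type*} [NormedAddCommGroup E]
    [NormedSpace ℝ E] {s : Set E} {f : E → ℝ} {f' : E →L[ℝ] ℝ} {x y : E}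
    (hf : ConvexOn ℝ s f) (hx : x ∈ s) (hy : y ∈ s) (hf' : HasFDerivAt f f' x) :
    f' (y - x) ≤ f y - f x := by
  let A : ℝ →ᵃ[ℝ] E := AffineMap.lineMap x y
  have hA : ∀ t ∈ Icc (0 : ℝ) 1, A t ∈ s := fun t ht => hf.1.lineMap_mem hx hy ht
  have hconv : ConvexOn ℝ (Icc 0 1) (f ∘ A) :=
    (hf.comp_affineMap A).subset hA (convex_Icc 0 1)
  have hderiv : HasDerivAt (f ∘ A) (f' (y - x)) 0 := by
    have hA0 : A 0 = x := AffineMap.lineMap_apply_zero x y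
    exact (hA0 ▸ hf').comp_hasDerivAt (0 : ℝ) AffineMap.hasDerivAt_lineMap
  have hslope := hconv.le_slope_of_hasDerivAt (by simp) (by simp) one_pos hderiv
  simpa [slope_def_field, A] using hslope

variable {n : ℕ} {f : EuclideanSpace ℝ (Fin n) → ℝ}

theorem fconj_lowerSemicontinuous (f : EuclideanSpace ℝ (Fin n) → ℝ) :
    LowerSemicontinuous (fconj f) :=
  lowerSemicontinuous_iSup fun _ => (continuous_coe_real_ereal.comp
    ((continuous_id.inner continuous_const).sub continuous_const)).lowerSemicontinuous

theorem fconj_ne_bot (f : EuclideanSpace ℝ (Fin n) → ℝ) (p : EuclideanSpace ℝ (Fin n)) :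
    fconj f p ≠ ⊥ :=
  ne_bot_of_le_ne_bot (EReal.coe_ne_bot (⟪p, 0⟫_ℝ - f 0)) (le_iSup_of_le (0 : EuclideanSpace ℝ (Fin n)) le_rfl)

theorem fconj_gradient_le (hconv : ConvexOn ℝ univ f) {x₀ : EuclideanSpace ℝ (Fin n)}
    (hdiff : DifferentiableAt ℝ f x₀) :
    fconj f (gradient f x₀) ≤ ((⟪gradient f x₀, x₀⟫_ℝ - f x₀ : ℝ) : EReal) := by
  refine iSup_le fun x => EReal.coe_le_coe_iff.2 ?_
  have h := hconv.apply_sub_le_of_hasFDerivAt (mem_univ x₀) (mem_univ x) hdiff.hasFDerivAt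
  rw [← inner_gradient_left, inner_sub_right] at h
  linarith

theorem gradient_mem_fconjDom (hconv : ConvexOn ℝ univ f) {x₀ : EuclideanSpace ℝ (Fin n)}
    (hdiff : DifferentiableAt ℝ f x₀) : gradient f x₀ ∈ fconjDom f :=
  (fconj_gradient_le hconv hdiff).trans_lt (EReal.coe_lt_top _)

theorem isClosed_fconjDom_of_le {M : ℝ} (hM : ∀ p ∈ fconjDom f, fconj f p ≤ (M : EReal)) :
    IsClosed (fconjDom f) := by
  have hdom : fconjDom f = fconj f ⁻¹' Iic (M : EReal) :=
    Subset.antisymm hM fun _ hp => lt_of_le_of_lt hp (EReal.coe_lt_top M)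
  rw [hdom]
  exact lowerSemicontinuous_iff_isClosed_preimage.1 (fconj_lowerSemicontinuous f) _

theorem dualDiv_le_of_fconj_le {M : ℝ} {p : EuclideanSpace ℝ (Fin n)}
    (hp : fconj f p ≤ (M : EReal)) (x : EuclideanSpace ℝ (Fin n)) :
    dualDiv f x p ≤ M + f x + ‖p‖ * ‖x‖ := by
  have hconj : (fconj f p).toReal ≤ M := by
    simpa using EReal.toReal_le_toReal hp (fconj_ne_bot f p) (EReal.coe_ne_top M)
  have hinner : -⟪p, x⟫_ℝ ≤ ‖p‖ * ‖x‖ := (neg_le_abs _).trans (abs_real_inner_le_norm p x)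
  unfold dualDiv
  linarith

theorem stmt5_general {n : ℕ} (L : ℝ)
    (f : EuclideanSpace ℝ (Fin n) → ℝ) (hf : LSmoothConvex L f)
    (M : ℝ) (hM : ∀ p ∈ fconjDom f, fconj f p ≤ (M : EReal))
    (pstar : EuclideanSpace ℝ (Fin n))
    (hps : pstar ∈ closure (fconjDom f))
    (hmin : ∀ q ∈ closure (fconjDom f), ‖pstar‖ ≤ ‖q‖) :
    IsClosed (fconjDom f) ∧ pstar ∈ fconjDom f ∧
      ∀ x₀, dualDiv f x₀ pstar ≤ M + f x₀ + ‖x₀‖ * ‖gradient f x₀‖ := by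
  obtain ⟨hconv, hdiff, -⟩ := hf
  have hclosed : IsClosed (fconjDom f) := isClosed_fconjDom_of_le hM
  have hpstar : pstar ∈ fconjDom f := hclosed.closure_eq ▸ hps
  refine ⟨hclosed, hpstar, fun x₀ => ?_⟩
  have hnorm : ‖pstar‖ ≤ ‖gradient f x₀‖ :=
    hmin _ (subset_closure (gradient_mem_fconjDom hconv (hdiff x₀)))
  calc dualDiv f x₀ pstar ≤ M + f x₀ + ‖pstar‖ * ‖x₀‖ :=
        dualDiv_le_of_fconj_le (hM pstar hpstar) x₀
    _ ≤ M + f x₀ + ‖x₀‖ * ‖gradient f x₀‖ := by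
        rw [mul_comm]
        gcongr

/-- if `f* ≤ M` on `dom f*`, then `dom f*` is closed (so `p⋆ ∈ dom f*`), and
for every `x₀`, `D_f(x₀, p⋆) ≤ M + f(x₀) + ‖x₀‖ ‖∇f(x₀)‖`. -/
theorem stmt5 {n : ℕ} (hn : 1 ≤ n) (L : ℝ) (hL : 0 < L)
    (f : EuclideanSpace ℝ (Fin n) → ℝ) (hf : LSmoothConvex L f)
    (M : ℝ) (hM : ∀ p ∈ fconjDom f, fconj f p ≤ (M : EReal))
    (pstar : EuclideanSpace ℝ (Fin n))
    (hps : pstar ∈ closure (fconjDom f))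
    (hmin : ∀ q ∈ closure (fconjDom f), ‖pstar‖ ≤ ‖q‖) :
    IsClosed (fconjDom f) ∧ pstar ∈ fconjDom f ∧
      ∀ x₀, dualDiv f x₀ pstar ≤ M + f x₀ + ‖x₀‖ * ‖gradient f x₀‖ :=
  stmt5_general L f hf M hM pstar hps hmin
end

section
/- Let L > 0, let f : ℝ^n → ℝ be L-smooth convex with f*(p) ≤ M for all p ∈ dom f*, and let (x_k) be the gradient descent sequence with initial point x₀ = 0 and constant step sizes η_i = 1/L. Then p⋆ ∈ dom f*, and: (a) for every k ≥ 1, ‖∇f(x_k) − p⋆‖² ≤ ‖∇f(x_k)‖² − ‖p⋆‖² ≤ 2L(M + f(0))/k; (b) if p⋆ ≠ 0, then for every integer k with k > 2L(M + f(0))/‖p⋆‖², one has ‖∇f(x_k)‖² > 2L(M + f(0))/k. -/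
open scoped InnerProductSpace
open Filter Topology

section Helpers

variable {E : Type*} [NormedAddCommGroup E] [InnerProductSpace ℝ E] [CompleteSpace E]
variable {f : E → ℝ} {L : ℝ}

lemma line_hasDerivAt (hf : Differentiable ℝ f) (x v : E) (t : ℝ) :
    HasDerivAt (fun s : ℝ => f (x + s • v)) ⟪gradient f (x + t • v), v⟫_ℝ t := by
  have h1 : HasDerivAt (fun s : ℝ => x + s • v) v t := by
    simpa using ((hasDerivAt_id t).smul_const v).const_add x
  have h2 : HasFDerivAt f (InnerProductSpace.toDual ℝ E (gradient f (x + t • v))) (x + t • v) :=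
    (hf (x + t • v)).hasGradientAt.hasFDerivAt
  have h3 : HasDerivAt (fun s : ℝ => f (x + s • v))
      (InnerProductSpace.toDual ℝ E (gradient f (x + t • v)) v) t := h2.comp_hasDerivAt t h1
  rw [InnerProductSpace.toDual_apply_apply] at h3
  exact h3

lemma convex_lower (hc : ConvexOn ℝ Set.univ f) (hf : Differentiable ℝ f) (x y : E) :
    f x + ⟪gradient f x, y - x⟫_ℝ ≤ f y := by
  set v := y - x with hv
  have hd0 : HasDerivAt (fun s : ℝ => f (x + s • v)) ⟪gradient f x, v⟫_ℝ 0 := by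
    simpa using line_hasDerivAt hf x v 0
  have hslope := hasDerivAt_iff_tendsto_slope.1 hd0
  have hmono : Tendsto (slope (fun s : ℝ => f (x + s • v)) 0) (𝓝[>] 0)
      (𝓝 ⟪gradient f x, v⟫_ℝ) :=
    hslope.mono_left (nhdsWithin_mono 0 (fun t ht => ne_of_gt ht))
  have hbound : ∀ᶠ t in 𝓝[>] (0:ℝ), slope (fun s : ℝ => f (x + s • v)) 0 t ≤ f y - f x := by
    filter_upwards [Ioc_mem_nhdsGT_of_mem (Set.mem_Ico.2 ⟨le_refl (0:ℝ), zero_lt_one⟩)] with t ht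
    have ht0 : 0 < t := ht.1
    have ht1 : t ≤ 1 := ht.2
    have hconv := hc.2 (Set.mem_univ x) (Set.mem_univ y)
      (by linarith : (0:ℝ) ≤ 1 - t) ht0.le (by ring)
    have hxy : x + t • v = (1 - t) • x + t • y := by
      rw [hv]; rw [smul_sub, sub_smul, one_smul]; abel
    rw [slope_def_field]
    simp only [zero_smul, add_zero, sub_zero]
    rw [div_le_iff₀ ht0, hxy]
    simp only [smul_eq_mul] at hconv
    nlinarith [hconv]
  have hfin := le_of_tendsto hmono hbound
  linarith

lemma descent (hL : 0 < L) (hf : Differentiable ℝ f)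
    (hlip : LipschitzWith (Real.toNNReal L) (fun z => gradient f z)) (x y : E) :
    f y ≤ f x + ⟪gradient f x, y - x⟫_ℝ + L / 2 * ‖y - x‖ ^ 2 := by
  set v := y - x with hv
  set φ : ℝ → ℝ := fun t => f (x + t • v) - t * ⟪gradient f x, v⟫_ℝ - t ^ 2 * (L / 2 * ‖v‖ ^ 2)
    with hφ
  have hd : ∀ t : ℝ, HasDerivAt φ
      (⟪gradient f (x + t • v), v⟫_ℝ - ⟪gradient f x, v⟫_ℝ - 2 * t * (L / 2 * ‖v‖ ^ 2)) t := by
    intro t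
    have h1 := line_hasDerivAt hf x v t
    have h2 : HasDerivAt (fun s : ℝ => s * ⟪gradient f x, v⟫_ℝ) ⟪gradient f x, v⟫_ℝ t := by
      simpa using (hasDerivAt_id t).mul_const (⟪gradient f x, v⟫_ℝ)
    have h3 : HasDerivAt (fun s : ℝ => s ^ 2 * (L / 2 * ‖v‖ ^ 2))
        (2 * t * (L / 2 * ‖v‖ ^ 2)) t := by
      have := (hasDerivAt_pow 2 t).mul_const (L / 2 * ‖v‖ ^ 2)
      simpa [mul_comm, mul_assoc, mul_left_comm] using this
    exact (h1.sub h2).sub h3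
  have hderiv : ∀ t ∈ Set.Ioo (0:ℝ) 1, deriv φ t ≤ 0 := by
    intro t ht
    rw [(hd t).deriv]
    have hl2 : ‖gradient f (x + t • v) - gradient f x‖ ≤ L * ‖t • v‖ := by
      have h := hlip.dist_le_mul (x + t • v) x
      simp only [dist_eq_norm] at h
      have h2 : (x + t • v) - x = t • v := by abel
      rw [h2] at h
      calc ‖gradient f (x + t • v) - gradient f x‖ ≤ (Real.toNNReal L : ℝ) * ‖t • v‖ := h
        _ = L * ‖t • v‖ := by rw [Real.coe_toNNReal _ hL.le]
    have hbd : ⟪gradient f (x + t • v) - gradient f x, v⟫_ℝ ≤ L * t * ‖v‖ ^ 2 := by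
      calc ⟪gradient f (x + t • v) - gradient f x, v⟫_ℝ
          ≤ ‖gradient f (x + t • v) - gradient f x‖ * ‖v‖ := real_inner_le_norm _ _
        _ ≤ (L * ‖t • v‖) * ‖v‖ := mul_le_mul_of_nonneg_right hl2 (norm_nonneg v)
        _ = L * t * ‖v‖ ^ 2 := by
            rw [norm_smul, Real.norm_eq_abs, abs_of_pos ht.1]; ring
    rw [inner_sub_left] at hbd
    nlinarith [hbd]
  have hdiffφ : Differentiable ℝ φ := fun t => (hd t).differentiableAt
  have hanti := antitoneOn_of_deriv_nonpos (convex_Icc (0:ℝ) 1) hdiffφ.continuous.continuousOn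
    (fun t _ => (hdiffφ t).differentiableWithinAt)
    (fun t ht => hderiv t (by rwa [interior_Icc] at ht))
  have h01 := hanti (Set.left_mem_Icc.2 zero_le_one) (Set.right_mem_Icc.2 zero_le_one) zero_le_one
  have e0 : φ 0 = f x := by simp [hφ]
  have e1 : φ 1 = f y - ⟪gradient f x, v⟫_ℝ - L / 2 * ‖v‖ ^ 2 := by
    have hxy : x + (1:ℝ) • v = y := by rw [hv, one_smul, add_sub_cancel]
    simp only [hφ, hxy, one_pow, one_mul]
  rw [e0, e1] at h01
  linarith

lemma lower_smooth (hL : 0 < L) (hc : ConvexOn ℝ Set.univ f) (hf : Differentiable ℝ f)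
    (hlip : LipschitzWith (Real.toNNReal L) (fun z => gradient f z)) (x y : E) :
    f x + ⟪gradient f x, y - x⟫_ℝ + 1 / (2 * L) * ‖gradient f y - gradient f x‖ ^ 2 ≤ f y := by
  set w := gradient f y - gradient f x with hw
  set z := y - (1 / L) • w with hz
  have h1 := convex_lower hc hf x z
  have h2 := descent hL hf hlip y z
  have hzx : z - x = (y - x) - (1 / L) • w := by rw [hz]; abel
  have hzy : z - y = -((1 / L) • w) := by rw [hz]; abel
  have e1 : ⟪gradient f x, z - x⟫_ℝ
      = ⟪gradient f x, y - x⟫_ℝ - (1 / L) * ⟪gradient f x, w⟫_ℝ := by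
    rw [hzx, inner_sub_right, real_inner_smul_right]
  have e2 : ⟪gradient f y, z - y⟫_ℝ = -((1 / L) * ⟪gradient f y, w⟫_ℝ) := by
    rw [hzy, inner_neg_right, real_inner_smul_right]
  have e3 : ‖z - y‖ ^ 2 = (1 / L) ^ 2 * ‖w‖ ^ 2 := by
    rw [hzy, norm_neg, norm_smul, Real.norm_eq_abs, abs_of_pos (by positivity : (0:ℝ) < 1 / L),
      mul_pow]
  have e4 : ⟪gradient f y, w⟫_ℝ - ⟪gradient f x, w⟫_ℝ = ‖w‖ ^ 2 := by
    rw [← inner_sub_left, ← hw, real_inner_self_eq_norm_sq]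
  have e4' : (1 / L) * ⟪gradient f y, w⟫_ℝ - (1 / L) * ⟪gradient f x, w⟫_ℝ
      = (1 / L) * ‖w‖ ^ 2 := by rw [← mul_sub, e4]
  have key : L / 2 * ((1 / L) ^ 2 * ‖w‖ ^ 2) = 1 / (2 * L) * ‖w‖ ^ 2 := by
    field_simp
  have e5 : (1 / L) * ‖w‖ ^ 2 = 2 * (1 / (2 * L) * ‖w‖ ^ 2) := by
    field_simp
  rw [e1] at h1
  rw [e2, e3, key] at h2
  linarith

lemma grad_sq_mono (hL : 0 < L) (hc : ConvexOn ℝ Set.univ f) (hf : Differentiable ℝ f)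
    (hlip : LipschitzWith (Real.toNNReal L) (fun z => gradient f z)) (a : E) :
    ‖gradient f (a - (1 / L) • gradient f a)‖ ^ 2 ≤ ‖gradient f a‖ ^ 2 := by
  set b := a - (1 / L) • gradient f a with hb
  set ga := gradient f a with hga
  set gb := gradient f b with hgb
  have h1 := lower_smooth hL hc hf hlip a b
  have h2 := lower_smooth hL hc hf hlip b a
  have eba : b - a = -((1 / L) • ga) := by rw [hb]; abel
  have eab : a - b = (1 / L) • ga := by rw [hb]; abel
  have e1 : ⟪ga, b - a⟫_ℝ = -((1 / L) * ⟪ga, ga⟫_ℝ) := by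
    rw [eba, inner_neg_right, real_inner_smul_right]
  have e2 : ⟪gb, a - b⟫_ℝ = (1 / L) * ⟪gb, ga⟫_ℝ := by
    rw [eab, real_inner_smul_right]
  have e3 : ‖ga - gb‖ ^ 2 = ‖gb - ga‖ ^ 2 := by rw [norm_sub_rev]
  rw [e1] at h1
  rw [e2, e3] at h2
  have e5 : (1 / L) * ‖gb - ga‖ ^ 2 = 2 * (1 / (2 * L) * ‖gb - ga‖ ^ 2) := by field_simp
  have hsum : (1 / L) * (⟪gb, ga⟫_ℝ - ⟪ga, ga⟫_ℝ + ‖gb - ga‖ ^ 2) ≤ 0 := by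
    rw [mul_add, mul_sub]
    linarith
  have hfac : ⟪gb, ga⟫_ℝ - ⟪ga, ga⟫_ℝ + ‖gb - ga‖ ^ 2 ≤ 0 := by
    have hLinv : (0:ℝ) < 1 / L := by positivity
    have := hsum
    rw [← mul_zero (1 / L)] at this
    exact le_of_mul_le_mul_left this hLinv
  have e6 : ‖gb - ga‖ ^ 2 = ‖gb‖ ^ 2 - 2 * ⟪gb, ga⟫_ℝ + ‖ga‖ ^ 2 := norm_sub_sq_real _ _
  have e7 : ⟪ga, ga⟫_ℝ = ‖ga‖ ^ 2 := real_inner_self_eq_norm_sq ga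
  have e8 : ⟪gb, ga⟫_ℝ ≤ ‖gb‖ * ‖ga‖ := real_inner_le_norm _ _
  nlinarith [sq_nonneg (‖ga‖ - ‖gb‖)]

end Helpers


lemma halfL_expand (L a b c : ℝ) (hL : L ≠ 0) :
    1 / (2 * L) * (a - 2 * b + c) = 1 / (2 * L) * a - 1 / L * b + 1 / (2 * L) * c := by
  field_simp

lemma mulk_helper (L a k : ℝ) (hL : L ≠ 0) : a * k = 2 * L * (k / (2 * L) * a) := by
  field_simp

/-- gradient descent with `x₀ = 0` and step size `1/L`, for `f` with `f* ≤ M`: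
`p⋆ ∈ dom f*`; (a) `‖∇f(x_k) − p⋆‖² ≤ ‖∇f(x_k)‖² − ‖p⋆‖² ≤ 2L(M + f 0)/k` for `k ≥ 1`;
(b) if `p⋆ ≠ 0` then `‖∇f(x_k)‖² > 2L(M + f 0)/k` for every `k > 2L(M + f 0)/‖p⋆‖²`. -/
theorem stmt6 {n : ℕ} (hn : 1 ≤ n) (L : ℝ) (hL : 0 < L)
    (f : EuclideanSpace ℝ (Fin n) → ℝ) (hf : LSmoothConvex L f)
    (M : ℝ) (hM : ∀ p ∈ fconjDom f, fconj f p ≤ (M : EReal))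
    (x : ℕ → EuclideanSpace ℝ (Fin n)) (hx0 : x 0 = 0)
    (hstep : ∀ k, x (k + 1) = x k - (1 / L) • gradient f (x k))
    (pstar : EuclideanSpace ℝ (Fin n))
    (hps : pstar ∈ closure (fconjDom f))
    (hmin : ∀ q ∈ closure (fconjDom f), ‖pstar‖ ≤ ‖q‖) :
    pstar ∈ fconjDom f ∧
    (∀ k : ℕ, 1 ≤ k →
      ‖gradient f (x k) - pstar‖ ^ 2 ≤ ‖gradient f (x k)‖ ^ 2 - ‖pstar‖ ^ 2 ∧
      ‖gradient f (x k)‖ ^ 2 - ‖pstar‖ ^ 2 ≤ 2 * L * (M + f 0) / k) ∧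
    (pstar ≠ 0 → ∀ k : ℕ, 2 * L * (M + f 0) / ‖pstar‖ ^ 2 < (k : ℝ) →
      2 * L * (M + f 0) / (k : ℝ) < ‖gradient f (x k)‖ ^ 2) := by
  obtain ⟨hcvx, hdiff, hlip⟩ := hf
  -- basic conjugate facts
  have hle_fconj : ∀ (p z : EuclideanSpace ℝ (Fin n)),
      ((⟪p, z⟫_ℝ - f z : ℝ) : EReal) ≤ fconj f p := by
    intro p z
    exact le_iSup (fun z => (((⟪p, z⟫_ℝ - f z : ℝ)) : EReal)) z
  have hfconj_le : ∀ (p : EuclideanSpace ℝ (Fin n)) (B : ℝ),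
      (∀ z, ⟪p, z⟫_ℝ - f z ≤ B) → fconj f p ≤ (B : EReal) := by
    intro p B h
    exact iSup_le fun z => by exact_mod_cast h z
  have hne_bot : ∀ p : EuclideanSpace ℝ (Fin n), fconj f p ≠ ⊥ :=
    fun p => ((EReal.bot_lt_coe _).trans_le (hle_fconj p 0)).ne'
  have hdom_real : ∀ p ∈ fconjDom f, ∀ z, ⟪p, z⟫_ℝ - f z ≤ (fconj f p).toReal := by
    intro p hp z
    have h1 := hle_fconj p z
    rw [← EReal.coe_toReal (LT.lt.ne hp) (hne_bot p)] at h1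
    exact_mod_cast h1
  -- gradients are in the domain
  have hgrad_dom : ∀ z : EuclideanSpace ℝ (Fin n), gradient f z ∈ fconjDom f := by
    intro z
    have h1 : fconj f (gradient f z) ≤ ((⟪gradient f z, z⟫_ℝ - f z : ℝ) : EReal) := by
      apply hfconj_le
      intro y
      have h2 := convex_lower hcvx hdiff z y
      rw [inner_sub_right] at h2
      linarith
    exact lt_of_le_of_lt h1 (EReal.coe_lt_top _)
  -- M bounds on the closure of the domain
  have hclosedS : ∀ p ∈ closure (fconjDom f), ∀ z, ⟪p, z⟫_ℝ - f z ≤ M := by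
    have hsub : fconjDom f ⊆ {p : EuclideanSpace ℝ (Fin n) | ∀ z, ⟪p, z⟫_ℝ - f z ≤ M} := by
      intro p hp z
      have h1 : ((⟪p, z⟫_ℝ - f z : ℝ) : EReal) ≤ (M : EReal) := le_trans (hle_fconj p z) (hM p hp)
      exact_mod_cast h1
    have hcl : IsClosed {p : EuclideanSpace ℝ (Fin n) | ∀ z, ⟪p, z⟫_ℝ - f z ≤ M} := by
      have heq : {p : EuclideanSpace ℝ (Fin n) | ∀ z, ⟪p, z⟫_ℝ - f z ≤ M}
          = ⋂ z, {p : EuclideanSpace ℝ (Fin n) | ⟪p, z⟫_ℝ - f z ≤ M} := by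
        ext p; simp [Set.mem_iInter]
      rw [heq]
      refine isClosed_iInter fun z => isClosed_le ?_ continuous_const
      exact (Continuous.inner continuous_id continuous_const).sub continuous_const
    intro p hp
    exact closure_minimal hsub hcl hp
  have hps_le : fconj f pstar ≤ (M : EReal) := hfconj_le _ _ (hclosedS pstar hps)
  have hps_dom : pstar ∈ fconjDom f := lt_of_le_of_lt hps_le (EReal.coe_lt_top M)
  obtain ⟨Fs, hFs⟩ : ∃ Fs : ℝ, Fs = (fconj f pstar).toReal := ⟨_, rfl⟩
  have hFY : ∀ z, ⟪pstar, z⟫_ℝ - f z ≤ Fs := by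
    rw [hFs]; exact hdom_real pstar hps_dom
  have hFsM : Fs ≤ M := by
    have h1 := hps_le
    rw [← EReal.coe_toReal (LT.lt.ne hps_dom) (hne_bot pstar)] at h1
    rw [hFs]
    exact_mod_cast h1
  -- convexity of the domain and the projection inequality
  have hconv_dom : Convex ℝ (fconjDom f) := by
    intro p hp q hq a b ha hb hab
    have key : fconj f (a • p + b • q)
        ≤ ((a * (fconj f p).toReal + b * (fconj f q).toReal : ℝ) : EReal) := by
      apply hfconj_le
      intro z
      have e1 : ⟪a • p + b • q, z⟫_ℝ = a * ⟪p, z⟫_ℝ + b * ⟪q, z⟫_ℝ := by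
        rw [inner_add_left, real_inner_smul_left, real_inner_smul_left]
      have e2 : a * f z + b * f z = f z := by rw [← add_mul, hab, one_mul]
      have h1 := mul_le_mul_of_nonneg_left (hdom_real p hp z) ha
      have h2 := mul_le_mul_of_nonneg_left (hdom_real q hq z) hb
      rw [e1]
      linarith
    exact lt_of_le_of_lt key (EReal.coe_lt_top _)
  have hproj : ∀ w ∈ closure (fconjDom f), ‖pstar‖ ^ 2 ≤ ⟪pstar, w⟫_ℝ := by
    intro w hw
    by_contra hlt
    push_neg at hlt
    have hcpos : 0 < ‖pstar‖ ^ 2 - ⟪pstar, w⟫_ℝ := by linarith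
    set c : ℝ := ‖pstar‖ ^ 2 - ⟪pstar, w⟫_ℝ with hc
    have hwp : w ≠ pstar := by
      intro h
      rw [h, real_inner_self_eq_norm_sq] at hlt
      exact lt_irrefl _ hlt
    have hDpos : 0 < ‖w - pstar‖ ^ 2 :=
      pow_pos (norm_pos_iff.mpr (sub_ne_zero.2 hwp)) 2
    set D : ℝ := ‖w - pstar‖ ^ 2 with hD
    set t : ℝ := min 1 (c / D) with htdef
    have ht0 : 0 < t := lt_min one_pos (div_pos hcpos hDpos)
    have ht1 : t ≤ 1 := min_le_left _ _
    have htD : t * D ≤ c := by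
      calc t * D ≤ (c / D) * D := mul_le_mul_of_nonneg_right (min_le_right _ _) hDpos.le
        _ = c := by field_simp
    have hmem : (1 - t) • pstar + t • w ∈ closure (fconjDom f) :=
      hconv_dom.closure hps hw (by linarith) ht0.le (by ring)
    have hmn := hmin _ hmem
    have hsq : ‖pstar‖ ^ 2 ≤ ‖(1 - t) • pstar + t • w‖ ^ 2 :=
      pow_le_pow_left₀ (norm_nonneg pstar) hmn 2
    have hexp : (1 - t) • pstar + t • w = pstar + t • (w - pstar) := by
      rw [smul_sub, sub_smul, one_smul]; abel
    rw [hexp, norm_add_sq_real] at hsq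
    have e1 : ⟪pstar, t • (w - pstar)⟫_ℝ = t * (⟪pstar, w⟫_ℝ - ‖pstar‖ ^ 2) := by
      rw [real_inner_smul_right, inner_sub_right, real_inner_self_eq_norm_sq]
    have e2 : ‖t • (w - pstar)‖ ^ 2 = t ^ 2 * D := by
      rw [norm_smul, Real.norm_eq_abs, abs_of_pos ht0, mul_pow, hD]
    rw [e1, e2] at hsq
    nlinarith [ht0, htD, hcpos]
  -- sequences
  obtain ⟨hs, hhs⟩ : ∃ hs : ℕ → ℝ, hs = fun k => f (x k) + Fs - ⟪pstar, x k⟫_ℝ := ⟨_, rfl⟩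
  obtain ⟨cs, hcs⟩ : ∃ cs : ℕ → ℝ, cs = fun k => ‖gradient f (x k)‖ ^ 2 - ‖pstar‖ ^ 2 :=
    ⟨_, rfl⟩
  have hs_nonneg : ∀ k, 0 ≤ hs k := by
    intro k
    have := hFY (x k)
    rw [hhs]
    dsimp only
    linarith
  have cmono : ∀ k, cs (k + 1) ≤ cs k := by
    intro k
    have h1 := grad_sq_mono hL hcvx hdiff hlip (x k)
    rw [hcs]
    dsimp only
    rw [hstep k]
    linarith
  have hstep_ineq : ∀ k, hs (k + 1) + 1 / (2 * L) * cs (k + 1) ≤ hs k := by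
    intro k
    have H := lower_smooth hL hcvx hdiff hlip (x (k + 1)) (x k)
    have ediff : x k - x (k + 1) = (1 / L) • gradient f (x k) := by
      rw [hstep k]; exact sub_sub_cancel _ _
    have e1 : ⟪gradient f (x (k + 1)), x k - x (k + 1)⟫_ℝ
        = (1 / L) * ⟪gradient f (x (k + 1)), gradient f (x k)⟫_ℝ := by
      rw [ediff, real_inner_smul_right]
    have e2 : ⟪pstar, x k⟫_ℝ - ⟪pstar, x (k + 1)⟫_ℝ = (1 / L) * ⟪pstar, gradient f (x k)⟫_ℝ := by
      rw [← inner_sub_right, ediff, real_inner_smul_right]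
    have e3 : ‖gradient f (x k) - gradient f (x (k + 1))‖ ^ 2
        = ‖gradient f (x k)‖ ^ 2 - 2 * ⟪gradient f (x k), gradient f (x (k + 1))⟫_ℝ
          + ‖gradient f (x (k + 1))‖ ^ 2 := norm_sub_sq_real _ _
    have e4 : 0 ≤ ‖gradient f (x k)‖ ^ 2 - 2 * ⟪pstar, gradient f (x k)⟫_ℝ + ‖pstar‖ ^ 2 := by
      have h5 := norm_sub_sq_real (gradient f (x k)) pstar
      have hcomm : ⟪gradient f (x k), pstar⟫_ℝ = ⟪pstar, gradient f (x k)⟫_ℝ :=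
        real_inner_comm _ _
      nlinarith [sq_nonneg ‖gradient f (x k) - pstar‖]
    have e4' : 0 ≤ 1 / (2 * L) * (‖gradient f (x k)‖ ^ 2
        - 2 * ⟪pstar, gradient f (x k)⟫_ℝ + ‖pstar‖ ^ 2) :=
      mul_nonneg (by positivity) e4
    have hcomm2 : ⟪gradient f (x k), gradient f (x (k + 1))⟫_ℝ
        = ⟪gradient f (x (k + 1)), gradient f (x k)⟫_ℝ := real_inner_comm _ _
    rw [e1] at H
    rw [e3, hcomm2] at H
    rw [hhs, hcs]
    dsimp only
    have hexpand := halfL_expand L (‖gradient f (x k)‖ ^ 2)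
      (⟪gradient f (x (k + 1)), gradient f (x k)⟫_ℝ) (‖gradient f (x (k + 1))‖ ^ 2) hL.ne'
    have hexpand2 := halfL_expand L (‖gradient f (x k)‖ ^ 2)
      (⟪pstar, gradient f (x k)⟫_ℝ) (‖pstar‖ ^ 2) hL.ne'
    rw [hexpand] at H
    rw [hexpand2] at e4'
    have hexpand3 : 1 / (2 * L) * (‖gradient f (x (k + 1))‖ ^ 2 - ‖pstar‖ ^ 2)
        = 1 / (2 * L) * ‖gradient f (x (k + 1))‖ ^ 2 - 1 / (2 * L) * ‖pstar‖ ^ 2 := by ring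
    rw [hexpand3]
    linarith
  -- main induction
  have main : ∀ k : ℕ, hs k + (k : ℝ) / (2 * L) * cs k ≤ hs 0 := by
    intro k
    induction k with
    | zero => simp
    | succ k ih =>
      have h1 := hstep_ineq k
      have h2 := cmono k
      have h3 : (k : ℝ) / (2 * L) * cs (k + 1) ≤ (k : ℝ) / (2 * L) * cs k :=
        mul_le_mul_of_nonneg_left h2 (by positivity)
      have hcast : ((k + 1 : ℕ) : ℝ) = (k : ℝ) + 1 := by push_cast; ring
      rw [hcast]
      have hsplit : hs (k + 1) + ((k : ℝ) + 1) / (2 * L) * cs (k + 1)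
          = (hs (k + 1) + 1 / (2 * L) * cs (k + 1)) + (k : ℝ) / (2 * L) * cs (k + 1) := by
        ring
      rw [hsplit]
      linarith
  have h0_le : hs 0 ≤ M + f 0 := by
    rw [hhs]
    dsimp only
    rw [hx0, inner_zero_right]
    linarith
  have key : ∀ k : ℕ, 1 ≤ k → cs k ≤ 2 * L * (M + f 0) / k := by
    intro k hk
    have hk' : (0 : ℝ) < k := by exact_mod_cast hk
    have hA : (k : ℝ) / (2 * L) * cs k ≤ M + f 0 := by
      have hmk := main k
      have hnn := hs_nonneg k
      linarith [hmk, hnn, h0_le]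
    rw [le_div_iff₀ hk']
    calc cs k * k = 2 * L * ((k : ℝ) / (2 * L) * cs k) := mulk_helper L (cs k) k hL.ne'
      _ ≤ 2 * L * (M + f 0) := mul_le_mul_of_nonneg_left hA (by positivity)
  have ha1 : ∀ k : ℕ, ‖gradient f (x k) - pstar‖ ^ 2
      ≤ ‖gradient f (x k)‖ ^ 2 - ‖pstar‖ ^ 2 := by
    intro k
    have hp := hproj (gradient f (x k)) (subset_closure (hgrad_dom (x k)))
    have h5 := norm_sub_sq_real (gradient f (x k)) pstar
    have hcomm : ⟪gradient f (x k), pstar⟫_ℝ = ⟪pstar, gradient f (x k)⟫_ℝ :=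
      real_inner_comm _ _
    linarith
  refine ⟨hps_dom, fun k hk => ⟨ha1 k, by simpa only [hcs] using key k hk⟩, ?_⟩
  intro hpne k hk
  have hT : 0 ≤ 2 * L * (M + f 0) := by
    have h1 := hs_nonneg 0
    have h2 := h0_le
    have h3 : (0:ℝ) ≤ M + f 0 := le_trans h1 h2
    have h4 : (0:ℝ) ≤ 2 * L := by positivity
    exact mul_nonneg h4 h3
  have hpp : (0 : ℝ) < ‖pstar‖ ^ 2 := pow_pos (norm_pos_iff.mpr hpne) 2
  have hk0 : (0 : ℝ) < k := lt_of_le_of_lt (div_nonneg hT hpp.le) hk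
  have hk1 : 1 ≤ k := Nat.one_le_iff_ne_zero.mpr (Nat.cast_ne_zero.mp hk0.ne')
  have h2 : 2 * L * (M + f 0) / k < ‖pstar‖ ^ 2 := by
    rw [div_lt_iff₀ hk0]
    rw [div_lt_iff₀ hpp] at hk
    linarith [hk]
  have h3 : ‖pstar‖ ^ 2 ≤ ‖gradient f (x k)‖ ^ 2 := by
    have hq : (0:ℝ) ≤ ‖gradient f (x k) - pstar‖ ^ 2 := sq_nonneg _
    linarith [ha1 k, hq]
  exact lt_of_lt_of_le h2 h3
end

section
/- Let f : ℝ^n → ℝ be L-smooth convex for some L > 0, let r > 0 and x₀ ∈ ℝ^n. Suppose X, Z : [0,∞) → ℝ^n are continuously differentiable with Z(0) = x₀, X(0) = ∇f(x₀), and for all t > 0: Ẋ(t) = ((r+2)/t)(∇f(Z(t)) − X(t)) and Ż(t) = −(t/(r+2))X(t). Define x̃(t) := Z(t) and z̃(t) := Z(t) − (t²/(r(r+2)))X(t). Then x̃ and z̃ are continuously differentiable on [0,∞), x̃(0) = z̃(0) = x₀, and for all t > 0: ẋ̃(t) = (r/t)(z̃(t) − x̃(t)) and ż̃(t) = −(t/r)∇f(x̃(t));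 that is, (x̃, z̃) is a solution of the NAG ODE with parameter r and initial point x₀. -/
open scoped InnerProductSpace
open Filter Topology

/-- if `(X, Z)` solves the norm-minimization AMD ODE with `Ψ* = f`,
`R = r + 2`, `Z(0) = x₀`, `X(0) = ∇f(x₀)`, then `x̃ := Z` and
`z̃ := Z − (t²/(r(r+2)))X` form a C¹ solution of the NAG ODE with parameter `r`
and initial point `x₀`. -/
theorem stmt8 {n : ℕ} (hn : 1 ≤ n) (L : ℝ) (hL : 0 < L)
    (f : EuclideanSpace ℝ (Fin n) → ℝ) (hf : LSmoothConvex L f)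
    (r : ℝ) (hr : 0 < r) (x₀ : EuclideanSpace ℝ (Fin n))
    (X Z X' Z' : ℝ → EuclideanSpace ℝ (Fin n))
    (hX : ∀ t ∈ Set.Ici (0 : ℝ), HasDerivWithinAt X (X' t) (Set.Ici 0) t)
    (hX' : ContinuousOn X' (Set.Ici 0))
    (hZ : ∀ t ∈ Set.Ici (0 : ℝ), HasDerivWithinAt Z (Z' t) (Set.Ici 0) t)
    (hZ' : ContinuousOn Z' (Set.Ici 0))
    (hZ0 : Z 0 = x₀) (hX0 : X 0 = gradient f x₀)
    (hode1 : ∀ t > (0 : ℝ), X' t = ((r + 2) / t) • (gradient f (Z t) - X t))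
    (hode2 : ∀ t > (0 : ℝ), Z' t = -((t / (r + 2)) • X t)) :
    ∃ xd zd : ℝ → EuclideanSpace ℝ (Fin n),
      (∀ t ∈ Set.Ici (0 : ℝ), HasDerivWithinAt (fun t => Z t) (xd t) (Set.Ici 0) t) ∧
      ContinuousOn xd (Set.Ici 0) ∧
      (∀ t ∈ Set.Ici (0 : ℝ),
        HasDerivWithinAt (fun t => Z t - (t ^ 2 / (r * (r + 2))) • X t)
          (zd t) (Set.Ici 0) t) ∧
      ContinuousOn zd (Set.Ici 0) ∧
      Z 0 = x₀ ∧ Z 0 - ((0 : ℝ) ^ 2 / (r * (r + 2))) • X 0 = x₀ ∧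
      (∀ t > (0 : ℝ),
        xd t = (r / t) • ((Z t - (t ^ 2 / (r * (r + 2))) • X t) - Z t)) ∧
      (∀ t > (0 : ℝ), zd t = -((t / r) • gradient f (Z t))) := by
  have hr2 : (0:ℝ) < r + 2 := by linarith
  have hc : r * (r + 2) ≠ 0 := by positivity
  refine ⟨Z', fun t => Z' t - ((2 * t / (r * (r + 2))) • X t + (t ^ 2 / (r * (r + 2))) • X' t),
    hZ, hZ', ?_, ?_, hZ0, by simp [hZ0], ?_, ?_⟩
  · intro t ht
    have hs : HasDerivWithinAt (fun t : ℝ => t ^ 2 / (r * (r + 2))) (2 * t / (r * (r + 2)))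
        (Set.Ici 0) t := by
      have : HasDerivAt (fun t : ℝ => t ^ 2 / (r * (r + 2))) (2 * t / (r * (r + 2))) t := by
        have h := (hasDerivAt_pow 2 t).div_const (r * (r + 2))
        simpa [mul_comm] using h
      exact this.hasDerivWithinAt
    have := (hZ t ht).sub (hs.smul (hX t ht))
    exact this.congr_deriv (by abel)
  · apply hZ'.sub
    apply ContinuousOn.add
    · exact ((continuousOn_const.mul continuousOn_id).div_const _).smul
        (fun t ht => ((hX t ht).continuousWithinAt))
    · exact (((continuousOn_id.pow 2)).div_const _).smul hX'
  · intro t ht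
    rw [hode2 t ht]
    have ht' : t ≠ 0 := ne_of_gt ht
    rw [smul_sub]
    match_scalars <;> field_simp <;> ring
  · intro t ht
    have ht' : t ≠ 0 := ne_of_gt ht
    simp only [hode1 t ht, hode2 t ht, smul_sub]
    match_scalars <;> field_simp <;> ring
end
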